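/- (Copy Lemma for pairs) For every tuple of jointly distributed random variables (A_1,A_2,B_1,B_2,C_1,C_2) taking finitely many values, there exists an extension to jointly distributed random variables (A_1,A_2,B_1,B_2,C_1,C_2,C_1',C_2') such that: the quadruple (A_1,A_2,C_1',C_2') has the same joint distribution as (A_1,A_2,C_1,C_2); and I(C_1',C_2'; B_1,B_2,C_1,C_2 | A_1,A_2) = 0. -/

import Mathlib

open scoped Classical

/-- Shannon entropy (natural-log base) of a random variable `X` defined on a finite
probability space `(Ω, p)` and taking values in a finite type `α`. -/
noncomputable def ent {Ω α : Type*} [Fintype Ω] [Fintype α] (p : Ω → ℝ) (X : Ω → α) : ℝ :=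
  ∑ a : α, Real.negMulLog (∑ ω : Ω, if X ω = a then p ω else 0)

/-- Probability that the random variable `X` takes the value `a`. -/
noncomputable def distOf {Ω α : Type*} [Fintype Ω] (p : Ω → ℝ) (X : Ω → α) (a : α) : ℝ :=
  ∑ ω : Ω, if X ω = a then p ω else 0

/-!
Write `A = (A₁, A₂)`, `C = (C₁, C₂)` and let `κ(a, ·)` be the conditional law of `C` given
`A = a`. On `Ω × γ₁ × γ₂` take `q (ω, c) = p ω · κ(A ω, c)` and let `D` be the second coordinate.
Every function of `ω` keeps its law under `q`, and `(A, D)` has the law of `(A, C)`. Whenever `A`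
is a function of `F`, the law of `(D, F)` factors as `P(F = t) · κ(A(t), c)`, so
`H(D, F) = H(F) + H(C | A)`. Applied to `F = A` and to `F = (B, C, A)` this makes
`I(D; B, C | A) = H(D, A) + H(B, C, A) - H(D, B, C, A) - H(A)` vanish.
-/

open Finset Real

section Entropy

variable {Ω Ω' α β : Type*} [Fintype Ω] [Fintype Ω']

theorem ent_eq_sum_negMulLog_distOf [Fintype α] (p : Ω → ℝ) (X : Ω → α) :
    ent p X = ∑ a, negMulLog (distOf p X a) := rfl

theorem distOf_nonneg {p : Ω → ℝ} (hp : ∀ ω, 0 ≤ p ω) (X : Ω → α) (a : α) :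
    0 ≤ distOf p X a :=
  sum_nonneg fun ω _ => ite_nonneg (hp ω) le_rfl

theorem sum_distOf_mul [Fintype α] (p : Ω → ℝ) (X : Ω → α) (f : α → ℝ) :
    ∑ a, distOf p X a * f a = ∑ ω, p ω * f (X ω) := by
  simp only [distOf, sum_mul, ite_mul, zero_mul]
  rw [sum_comm]
  simp

theorem sum_distOf_prodMk [Fintype β] (p : Ω → ℝ) (X : Ω → α) (Y : Ω → β) (a : α) :
    ∑ b, distOf p (fun ω => (X ω, Y ω)) (a, b) = distOf p X a := by
  unfold distOf
  rw [sum_comm]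
  simp [Prod.ext_iff, ite_and]

theorem distOf_prodMk_le [Fintype β] {p : Ω → ℝ} (hp : ∀ ω, 0 ≤ p ω) (X : Ω → α) (Y : Ω → β)
    (a : α) (b : β) : distOf p (fun ω => (X ω, Y ω)) (a, b) ≤ distOf p X a :=
  sum_distOf_prodMk p X Y a ▸
    single_le_sum (fun b _ => distOf_nonneg hp _ (a, b)) (mem_univ b)

theorem distOf_comp_equiv (p : Ω → ℝ) (e : Ω' ≃ Ω) (Y : Ω' → α) (a : α) :
    distOf (fun i => p (e i)) Y a = distOf p (fun ω => Y (e.symm ω)) a :=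
  Fintype.sum_equiv e _ _ fun i => by simp

theorem ent_comp_equiv [Fintype α] (p : Ω → ℝ) (e : Ω' ≃ Ω) (Y : Ω' → α) :
    ent (fun i => p (e i)) Y = ent p (fun ω => Y (e.symm ω)) := by
  simp only [ent_eq_sum_negMulLog_distOf, distOf_comp_equiv]

theorem distOf_equiv_comp (p : Ω → ℝ) (g : α ≃ β) (X : Ω → α) (b : β) :
    distOf p (fun ω => g (X ω)) b = distOf p X (g.symm b) := by
  simp only [distOf, ← Equiv.eq_symm_apply]

theorem ent_equiv_comp [Fintype α] [Fintype β] (p : Ω → ℝ) (g : α ≃ β) (X : Ω → α) :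
    ent p (fun ω => g (X ω)) = ent p X := by
  simp only [ent_eq_sum_negMulLog_distOf, distOf_equiv_comp]
  exact g.symm.sum_comp fun a => negMulLog (distOf p X a)

end Entropy

section Copy

variable {Ω α δ τ : Type*} [Fintype Ω]

-- Off the support of `A` the conditional law is replaced by the point mass at `c₀`.
noncomputable def condDist (p : Ω → ℝ) (A : Ω → α) (C : Ω → δ) (c₀ : δ) (a : α) (c : δ) : ℝ :=
  if distOf p A a = 0 then if c = c₀ then 1 else 0
  else distOf p (fun ω => (A ω, C ω)) (a, c) / distOf p A a

theorem condDist_nonneg {p : Ω → ℝ} (hp : ∀ ω, 0 ≤ p ω) (A : Ω → α) (C : Ω → δ) (c₀ : δ)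
    (a : α) (c : δ) : 0 ≤ condDist p A C c₀ a c := by
  unfold condDist
  split_ifs
  · exact zero_le_one
  · exact le_rfl
  · exact div_nonneg (distOf_nonneg hp _ _) (distOf_nonneg hp _ _)

noncomputable def copyMeasure (p : Ω → ℝ) (A : Ω → α) (C : Ω → δ) (c₀ : δ) : Ω × δ → ℝ :=
  fun x => p x.1 * condDist p A C c₀ (A x.1) x.2

theorem copyMeasure_nonneg {p : Ω → ℝ} (hp : ∀ ω, 0 ≤ p ω) (A : Ω → α) (C : Ω → δ) (c₀ : δ)
    (x : Ω × δ) : 0 ≤ copyMeasure p A C c₀ x :=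
  mul_nonneg (hp _) (condDist_nonneg hp _ _ _ _ _)

variable [Fintype δ]

theorem sum_condDist (p : Ω → ℝ) (A : Ω → α) (C : Ω → δ) (c₀ : δ) (a : α) :
    ∑ c, condDist p A C c₀ a c = 1 := by
  by_cases h : distOf p A a = 0
  · simp [condDist, h]
  · simp only [condDist, if_neg h, ← sum_div, sum_distOf_prodMk, div_self h]

theorem distOf_mul_condDist {p : Ω → ℝ} (hp : ∀ ω, 0 ≤ p ω) (A : Ω → α) (C : Ω → δ) (c₀ : δ)
    (a : α) (c : δ) :
    distOf p A a * condDist p A C c₀ a c = distOf p (fun ω => (A ω, C ω)) (a, c) := by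
  by_cases h : distOf p A a = 0
  · have hAC := le_antisymm (h ▸ distOf_prodMk_le hp A C a c) (distOf_nonneg hp _ (a, c))
    rw [h, hAC, zero_mul]
  · rw [condDist, if_neg h, mul_div_cancel₀ _ h]

variable (p : Ω → ℝ) (A : Ω → α) (C : Ω → δ) (c₀ : δ)

theorem sum_copyMeasure (hp : ∑ ω, p ω = 1) : ∑ x, copyMeasure p A C c₀ x = 1 := by
  simp only [copyMeasure, Fintype.sum_prod_type, ← mul_sum, sum_condDist, mul_one, hp]

theorem distOf_copyMeasure_fst (F : Ω → τ) (t : τ) :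
    distOf (copyMeasure p A C c₀) (fun x => F x.1) t = distOf p F t := by
  simp only [distOf, copyMeasure, Fintype.sum_prod_type]
  refine sum_congr rfl fun ω _ => ?_
  split_ifs
  · rw [← mul_sum, sum_condDist, mul_one]
  · exact sum_const_zero

theorem ent_copyMeasure_fst [Fintype τ] (F : Ω → τ) :
    ent (copyMeasure p A C c₀) (fun x => F x.1) = ent p F := by
  simp only [ent_eq_sum_negMulLog_distOf, distOf_copyMeasure_fst]

variable {p A C c₀}

theorem distOf_copyMeasure_snd_fst (F : Ω → τ) (pr : τ → α) (hpr : ∀ ω, A ω = pr (F ω))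
    (c : δ) (t : τ) :
    distOf (copyMeasure p A C c₀) (fun x => (x.2, F x.1)) (c, t)
      = distOf p F t * condDist p A C c₀ (pr t) c := by
  simp only [distOf, copyMeasure, Fintype.sum_prod_type, sum_mul]
  refine sum_congr rfl fun ω _ => ?_
  by_cases h : F ω = t
  · simp [h, hpr ω]
  · simp [h]

theorem distOf_copyMeasure_fst_snd (hp : ∀ ω, 0 ≤ p ω) (w : α × δ) :
    distOf (copyMeasure p A C c₀) (fun x => (A x.1, x.2)) w
      = distOf (copyMeasure p A C c₀) (fun x => (A x.1, C x.1)) w :=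
  calc distOf (copyMeasure p A C c₀) (fun x => (A x.1, x.2)) w
      = distOf (copyMeasure p A C c₀) (fun x => Equiv.prodComm δ α (x.2, A x.1)) w := rfl
    _ = distOf p A w.1 * condDist p A C c₀ w.1 w.2 := by
      rw [distOf_equiv_comp, distOf_copyMeasure_snd_fst (A := A) A id fun _ => rfl]; rfl
    _ = distOf (copyMeasure p A C c₀) (fun x => (A x.1, C x.1)) w := by
      rw [distOf_mul_condDist hp, distOf_copyMeasure_fst p A C c₀ fun ω => (A ω, C ω)]

theorem ent_copyMeasure_snd_fst [Fintype τ] (F : Ω → τ) (pr : τ → α) (hpr : ∀ ω, A ω = pr (F ω)) :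
    ent (copyMeasure p A C c₀) (fun x => (x.2, F x.1))
      = ent p F + ∑ ω, p ω * ∑ c, negMulLog (condDist p A C c₀ (A ω) c) := by
  simp only [ent_eq_sum_negMulLog_distOf, Fintype.sum_prod_type,
    distOf_copyMeasure_snd_fst F pr hpr, negMulLog_mul]
  rw [sum_comm]
  simp only [sum_add_distrib, ← sum_mul, ← mul_sum, sum_condDist, one_mul, hpr]
  rw [sum_distOf_mul p F fun t => ∑ c, negMulLog (condDist p A C c₀ (pr t) c)]

theorem copyMeasure_condMutualInfo_eq_zero [Fintype α] [Fintype τ] (F : Ω → τ) (pr : τ → α)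
    (hpr : ∀ ω, A ω = pr (F ω)) :
    ent (copyMeasure p A C c₀) (fun x => (x.2, A x.1)) + ent (copyMeasure p A C c₀) (fun x => F x.1)
      - ent (copyMeasure p A C c₀) (fun x => (x.2, F x.1))
      - ent (copyMeasure p A C c₀) (fun x => A x.1) = 0 := by
  rw [ent_copyMeasure_snd_fst (A := A) A id fun _ => rfl, ent_copyMeasure_snd_fst F pr hpr,
    ent_copyMeasure_fst, ent_copyMeasure_fst]
  ring

end Copy

/-- **Copy Lemma for pairs.** Every tuple of jointly distributed random variables
`(A₁,A₂,B₁,B₂,C₁,C₂)` taking finitely many values can be extended to a jointly distributed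
tuple `(A₁,A₂,B₁,B₂,C₁,C₂,C₁',C₂')` such that `(A₁,A₂,C₁',C₂')` has the same joint
distribution as `(A₁,A₂,C₁,C₂)` and `I(C₁',C₂'; B₁,B₂,C₁,C₂ | A₁,A₂) = 0`. -/
theorem copy_lemma_pairs
    {Ω α₁ α₂ β₁ β₂ γ₁ γ₂ : Type*} [Fintype Ω]
    [Fintype α₁] [Fintype α₂] [Fintype β₁] [Fintype β₂] [Fintype γ₁] [Fintype γ₂]
    (p : Ω → ℝ) (hp0 : ∀ ω, 0 ≤ p ω) (hp1 : ∑ ω, p ω = 1)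
    (A₁ : Ω → α₁) (A₂ : Ω → α₂) (B₁ : Ω → β₁) (B₂ : Ω → β₂) (C₁ : Ω → γ₁) (C₂ : Ω → γ₂) :
    ∃ (m : ℕ) (q : Fin m → ℝ), (∀ ω, 0 ≤ q ω) ∧ (∑ ω, q ω = 1) ∧
      ∃ (A₁' : Fin m → α₁) (A₂' : Fin m → α₂) (B₁' : Fin m → β₁) (B₂' : Fin m → β₂)
        (C₁' : Fin m → γ₁) (C₂' : Fin m → γ₂) (D₁ : Fin m → γ₁) (D₂ : Fin m → γ₂),
        -- the new tuple extends the original one: the first six variables have the same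
        -- joint distribution as `(A₁,A₂,B₁,B₂,C₁,C₂)`
        (∀ v : α₁ × α₂ × β₁ × β₂ × γ₁ × γ₂,
          distOf q (fun ω => (A₁' ω, A₂' ω, B₁' ω, B₂' ω, C₁' ω, C₂' ω)) v
            = distOf p (fun ω => (A₁ ω, A₂ ω, B₁ ω, B₂ ω, C₁ ω, C₂ ω)) v) ∧
        -- `(A₁,A₂,D₁,D₂)` is distributed like `(A₁,A₂,C₁,C₂)`
        (∀ v : α₁ × α₂ × γ₁ × γ₂,
          distOf q (fun ω => (A₁' ω, A₂' ω, D₁ ω, D₂ ω)) v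
            = distOf q (fun ω => (A₁' ω, A₂' ω, C₁' ω, C₂' ω)) v) ∧
        -- `I(D₁,D₂ ; B₁,B₂,C₁,C₂ | A₁,A₂) = 0`
        ent q (fun ω => (D₁ ω, D₂ ω, A₁' ω, A₂' ω))
          + ent q (fun ω => (B₁' ω, B₂' ω, C₁' ω, C₂' ω, A₁' ω, A₂' ω))
          - ent q (fun ω => (D₁ ω, D₂ ω, B₁' ω, B₂' ω, C₁' ω, C₂' ω, A₁' ω, A₂' ω))
          - ent q (fun ω => (A₁' ω, A₂' ω)) = 0 := by
  obtain ⟨ω₀, -⟩ := exists_ne_zero_of_sum_ne_zero (hp1 ▸ one_ne_zero : ∑ ω, p ω ≠ 0)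
  set A : Ω → α₁ × α₂ := fun ω => (A₁ ω, A₂ ω)
  set C : Ω → γ₁ × γ₂ := fun ω => (C₁ ω, C₂ ω)
  set q := copyMeasure p A C (C ω₀)
  set e := (Fintype.equivFin (Ω × γ₁ × γ₂)).symm
  refine ⟨_, fun i => q (e i), fun i => copyMeasure_nonneg hp0 _ _ _ _, ?_,
    fun i => A₁ (e i).1, fun i => A₂ (e i).1, fun i => B₁ (e i).1, fun i => B₂ (e i).1,
    fun i => C₁ (e i).1, fun i => C₂ (e i).1, fun i => (e i).2.1, fun i => (e i).2.2,
    fun v => ?_, fun v => ?_, ?_⟩ <;>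
    simp only [e.sum_comp q, distOf_comp_equiv, ent_comp_equiv, Equiv.apply_symm_apply]
  · exact sum_copyMeasure p A C _ hp1
  · exact distOf_copyMeasure_fst p A C _ (fun ω => (A₁ ω, A₂ ω, B₁ ω, B₂ ω, C₁ ω, C₂ ω)) v
  · exact (distOf_equiv_comp q (Equiv.prodAssoc _ _ _) (fun x => (A x.1, x.2)) v).trans
      ((distOf_copyMeasure_fst_snd hp0 _).trans (distOf_equiv_comp q _ _ v).symm)
  · have h := copyMeasure_condMutualInfo_eq_zero (p := p) (A := A) (C := C) (c₀ := C ω₀)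
      (fun ω => (B₁ ω, B₂ ω, C₁ ω, C₂ ω, A₁ ω, A₂ ω)) (·.2.2.2.2) fun _ => rfl
    rwa [← ent_equiv_comp q (Equiv.prodAssoc _ _ _) (fun x => (x.2, A x.1)),
      ← ent_equiv_comp q (Equiv.prodAssoc _ _ _) (fun x => (x.2, _))] at h
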